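/- Let n ≥ 3. In the complex Hom((hₙ ⊗ Λ*Jₙ)^{so(n)}, ℝ) with coboundary dual to the Lie homology boundary, the invariant cochains satisfy: δ(gₙ*) = -2 sₙ*, δ(γₙ*) = 0, and δ(wₙ*) = 0, where gₙ* = Σᵢ dxⁱ ⊗ dxⁱ, sₙ* = Σ_{i<j} α*_{ij} ⊗ dxⁱ∧dxʲ, γₙ* = Σ_{i<j} (-1)^{i+j-1} α*_{ij} ⊗ dx¹∧…d̂xⁱ…d̂xʲ…∧dxⁿ, and wₙ* = Σᵢ ± dxⁱ ⊗ dx¹∧…d̂xⁱ…∧dxⁿ. -/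

import Mathlib

/-!  STATEMENT 16: In the complex `Hom((hₙ ⊗ Λ*Jₙ)^{so(n)}, ℝ)` whose coboundary `δ` is
dual to the Lie homology boundary `d(x ⊗ y₁∧…∧y_k) = Σᵢ (-1)^{i+1} [x,yᵢ] ⊗ y₁∧…ŷᵢ…∧y_k`
(1-based; `(-1)ⁱ` with 0-based indices), the invariant cochains satisfy
`δ(gₙ*) = -2 sₙ*`, `δ(γₙ*) = 0`, `δ(wₙ*) = 0`, where
`gₙ* = Σᵢ dxⁱ⊗dxⁱ`, `sₙ* = Σ_{i<j} α*_{ij} ⊗ dxⁱ∧dxʲ`,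
`γₙ* = Σ_{i<j} (-1)^{i+j-1} α*_{ij} ⊗ dx¹∧…d̂xⁱ…d̂xʲ…∧dxⁿ`,
`wₙ* = Σᵢ (-1)^{i-1} dxⁱ ⊗ dx¹∧…d̂xⁱ…∧dxⁿ`.  Cochains are realized as real-valued
functions of `(x, y₁, …, y_k)`; `dxⁱ` reads off the translation component of a field
(its value at the origin) and `α*_{ij}` its `α_{ij}`-component (from its linear part). -/

/-- Vector fields on ℝⁿ, modelled as maps assigning to each point the components of the
field at that point. -/
abbrev Vec (n : ℕ) := (Fin n → ℝ) → (Fin n → ℝ)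

/-- The Lie bracket of vector fields: `[X,Y] = X(Y) - Y(X)` (directional derivatives of
the coefficient functions). -/
noncomputable def br {n : ℕ} (X Y : Vec n) : Vec n :=
  fun p => fderiv ℝ Y p (X p) - fderiv ℝ X p (Y p)

/-- The rotational vector field `α_{ij} = xᵢ ∂/∂xⱼ - xⱼ ∂/∂xⁱ`. -/
noncomputable def alphaVF {n : ℕ} (i j : Fin n) : Vec n :=
  fun p => p i • (Pi.single j (1 : ℝ) : Fin n → ℝ) - p j • (Pi.single i (1 : ℝ) : Fin n → ℝ)

/-- The translation vector field `∂/∂xⁱ`. -/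
def delVF {n : ℕ} (i : Fin n) : Vec n := fun _ => (Pi.single i (1 : ℝ) : Fin n → ℝ)

/-- `hₙ`, the span of the `α_{ij}` (`i < j`) and the `∂/∂xⁱ`:
the affine orthogonal Lie algebra realized by vector fields on ℝⁿ. -/
noncomputable def hAff (n : ℕ) : Submodule ℝ (Vec n) :=
  Submodule.span ℝ
    ({X | ∃ i j : Fin n, i < j ∧ X = alphaVF i j} ∪ {X | ∃ i : Fin n, X = delVF i})

/-- `Jₙ`, the span of the translations `∂/∂xⁱ`. -/
noncomputable def JAff (n : ℕ) : Submodule ℝ (Vec n) :=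
  Submodule.span ℝ {X | ∃ i : Fin n, X = delVF i}

/-- The copy of `so(n)` inside `hₙ`: the span of the `α_{ij}`, `i < j`. -/
noncomputable def soAff (n : ℕ) : Submodule ℝ (Vec n) :=
  Submodule.span ℝ {X | ∃ i j : Fin n, i < j ∧ X = alphaVF i j}

/-- The order-preserving embedding `Fin (m-1) → Fin m` skipping the index `i`. -/
def skipE {m : ℕ} (i : Fin m) (b : Fin (m - 1)) : Fin m :=
  if (b : ℕ) < (i : ℕ) then ⟨b, by have := b.isLt; have := i.isLt; omega⟩
  else ⟨(b : ℕ) + 1, by have := b.isLt; have := i.isLt; omega⟩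

/-- The order-preserving embedding `Fin (m-2) → Fin m` skipping the indices `i < j`. -/
def skip2E {m : ℕ} (i j : Fin m) (b : Fin (m - 2)) : Fin m :=
  if (b : ℕ) < (i : ℕ) then ⟨b, by have := b.isLt; have := i.isLt; omega⟩
  else if (b : ℕ) + 1 < (j : ℕ) then ⟨(b : ℕ) + 1, by have := j.isLt; omega⟩
  else ⟨(b : ℕ) + 2, by have := b.isLt; have := i.isLt; omega⟩

/-- `dxⁱ` applied to an affine field: its `∂/∂xⁱ`-component, i.e. `i`-th value at `0`. -/
def dxDual {n : ℕ} (i : Fin n) (x : Vec n) : ℝ := x 0 i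

/-- `α*_{ij}` applied to an affine field: the `α_{ij}`-component, read off from the linear
part of the field (`α_{ij}` maps `eᵢ ↦ eⱼ`). -/
def alphaDual {n : ℕ} (i j : Fin n) (x : Vec n) : ℝ :=
  (x (Pi.single i (1 : ℝ)) - x 0) j

/-- `gₙ* = Σᵢ dxⁱ ⊗ dxⁱ`, a cochain on `hₙ ⊗ Λ¹Jₙ`. -/
def gStar (n : ℕ) (x : Vec n) (y : Fin 1 → Vec n) : ℝ :=
  ∑ i : Fin n, dxDual i x * dxDual i (y 0)

/-- `sₙ* = Σ_{i<j} α*_{ij} ⊗ dxⁱ∧dxʲ`, a cochain on `hₙ ⊗ Λ²Jₙ`. -/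
def sStar (n : ℕ) (x : Vec n) (y : Fin 2 → Vec n) : ℝ :=
  ∑ j : Fin n, ∑ i ∈ Finset.Iio j,
    alphaDual i j x * (dxDual i (y 0) * dxDual j (y 1) - dxDual j (y 0) * dxDual i (y 1))

/-- `γₙ* = Σ_{i<j} (-1)^{i+j-1} α*_{ij} ⊗ dx¹∧…d̂xⁱ…d̂xʲ…∧dxⁿ` on `hₙ ⊗ Λ^{n-2}Jₙ`. -/
noncomputable def gammaStar (n : ℕ) (x : Vec n) (y : Fin (n - 2) → Vec n) : ℝ :=
  ∑ j : Fin n, ∑ i ∈ Finset.Iio j,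
    (-1 : ℝ) ^ ((i : ℕ) + (j : ℕ) + 1) * alphaDual i j x *
      Matrix.det (Matrix.of fun a b : Fin (n - 2) => dxDual (skip2E i j b) (y a))

/-- `wₙ* = Σᵢ (-1)^{i-1} dxⁱ ⊗ dx¹∧…d̂xⁱ…∧dxⁿ` on `hₙ ⊗ Λ^{n-1}Jₙ`. -/
noncomputable def wStar (n : ℕ) (x : Vec n) (y : Fin (n - 1) → Vec n) : ℝ :=
  ∑ i : Fin n, (-1 : ℝ) ^ (i : ℕ) * dxDual i x *
      Matrix.det (Matrix.of fun a b : Fin (n - 1) => dxDual (skipE i b) (y a))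


/-! ### Auxiliary lemmas -/

open Matrix in
lemma mem_JAff_const {n : ℕ} {y : Vec n} (hy : y ∈ JAff n) : ∃ c : Fin n → ℝ, y = fun _ => c := by
  induction hy using Submodule.span_induction with
  | mem x h => obtain ⟨i, rfl⟩ := h; exact ⟨Pi.single i 1, rfl⟩
  | zero => exact ⟨0, rfl⟩
  | add x y _ _ hx hy =>
      obtain ⟨c, rfl⟩ := hx; obtain ⟨d, rfl⟩ := hy; exact ⟨c + d, rfl⟩
  | smul a x _ hx => obtain ⟨c, rfl⟩ := hx; exact ⟨a • c, rfl⟩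

open Matrix in
lemma mem_hAff_affine {n : ℕ} {x : Vec n} (hx : x ∈ hAff n) :
    ∃ (A : Matrix (Fin n) (Fin n) ℝ) (c : Fin n → ℝ),
      Aᵀ = -A ∧ x = fun p => A.mulVec p + c := by
  induction hx using Submodule.span_induction with
  | mem x h =>
      rcases h with ⟨i, j, _, rfl⟩ | ⟨i, rfl⟩
      · refine ⟨Matrix.of fun k l => (Pi.single j (1:ℝ) : Fin n → ℝ) k * (Pi.single i (1:ℝ) : Fin n → ℝ) l
            - (Pi.single i (1:ℝ) : Fin n → ℝ) k * (Pi.single j (1:ℝ) : Fin n → ℝ) l, 0, ?_, ?_⟩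
        · ext k l
          simp only [Matrix.transpose_apply, Matrix.neg_apply, Matrix.of_apply]
          ring
        · funext p k
          have hs : ∀ (a : Fin n), ∑ l, (Pi.single a (1:ℝ) : Fin n → ℝ) l * p l = p a := by
            intro a
            simp [Pi.single_apply]
          simp only [alphaVF, Matrix.mulVec, Matrix.of_apply, dotProduct, sub_mul,
            Finset.sum_sub_distrib, mul_assoc, ← Finset.mul_sum, hs,
            Pi.add_apply, Pi.zero_apply, Pi.sub_apply, Pi.smul_apply, smul_eq_mul]
          ring
      · exact ⟨0, Pi.single i 1, by simp, by funext p; simp [delVF]⟩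
  | zero => exact ⟨0, 0, by simp, by funext p; simp⟩
  | add x y _ _ hx hy =>
      obtain ⟨A, c, hA, rfl⟩ := hx; obtain ⟨B, d, hB, rfl⟩ := hy
      refine ⟨A + B, c + d, by rw [Matrix.transpose_add, hA, hB]; abel, ?_⟩
      funext p; simp [Matrix.add_mulVec]; abel
  | smul a x _ hx =>
      obtain ⟨A, c, hA, rfl⟩ := hx
      refine ⟨a • A, a • c, by rw [Matrix.transpose_smul, hA]; simp, ?_⟩
      funext p; simp [Matrix.smul_mulVec]

lemma fderiv_affine {n : ℕ} (A : Matrix (Fin n) (Fin n) ℝ) (c : Fin n → ℝ) (p : Fin n → ℝ) :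
    fderiv ℝ (fun q => A.mulVec q + c) p
      = LinearMap.toContinuousLinearMap (Matrix.mulVecLin A) := by
  have h : (fun q : Fin n → ℝ => A.mulVec q + c)
      = fun q => (LinearMap.toContinuousLinearMap (Matrix.mulVecLin A)) q + c := by
    funext q; simp
  rw [h, fderiv_add_const]
  exact (LinearMap.toContinuousLinearMap (Matrix.mulVecLin A)).fderiv

lemma br_affine_const {n : ℕ} (A : Matrix (Fin n) (Fin n) ℝ) (c u : Fin n → ℝ) :
    br (fun p => A.mulVec p + c) (fun _ => u) = fun _ => -(A.mulVec u) := by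
  funext p
  simp [br, fderiv_affine, fderiv_const]
  rw [show fderiv ℝ A.mulVec p = LinearMap.toContinuousLinearMap (Matrix.mulVecLin A) from
    (LinearMap.toContinuousLinearMap (Matrix.mulVecLin A)).fderiv]
  rfl

@[simp] lemma dxDual_const {n : ℕ} (i : Fin n) (u : Fin n → ℝ) :
    dxDual i (fun _ => u) = u i := rfl

@[simp] lemma alphaDual_const {n : ℕ} (i j : Fin n) (u : Fin n → ℝ) :
    alphaDual i j (fun _ => u) = 0 := by simp [alphaDual]

open Matrix in
lemma alphaDual_affine {n : ℕ} (A : Matrix (Fin n) (Fin n) ℝ) (c : Fin n → ℝ) (i j : Fin n) :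
    alphaDual i j (fun p => A.mulVec p + c) = A j i := by
  simp [alphaDual]

lemma skipE_eq_succAbove {m : ℕ} (i : Fin (m + 1)) (b : Fin m) :
    skipE i b = i.succAbove b := by
  apply Fin.ext
  simp only [skipE, Fin.succAbove, Fin.lt_def, Fin.coe_castSucc, apply_ite (Fin.val),
    Fin.val_succ]

open Matrix in
lemma det_updateRow_eq_sum {n : ℕ} (C : Matrix (Fin n) (Fin n) ℝ) (a : Fin n) (v : Fin n → ℝ) :
    (C.updateRow a v).det = ∑ j, C.adjugate j a * v j := by
  have h1 : (C.updateRow a v) = (Cᵀ.updateCol a v)ᵀ := by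
    rw [Matrix.updateCol_transpose, Matrix.transpose_transpose]
  rw [h1, Matrix.det_transpose, ← Matrix.cramer_apply, Matrix.cramer_eq_adjugate_mulVec]
  rw [Matrix.mulVec, dotProduct]
  refine Finset.sum_congr rfl fun j _ => ?_
  rw [← Matrix.adjugate_transpose, Matrix.transpose_apply]

open Matrix in
lemma sum_det_updateRow_mulVec {n : ℕ} (C A : Matrix (Fin n) (Fin n) ℝ) :
    ∑ a, (C.updateRow a (A.mulVec (C a))).det = A.trace * C.det := by
  have key : ∀ a : Fin n, (C.updateRow a (A.mulVec (C a))).det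
      = ((C * Aᵀ) * C.adjugate) a a := by
    intro a
    rw [det_updateRow_eq_sum, Matrix.mul_apply]
    refine Finset.sum_congr rfl fun j _ => ?_
    rw [Matrix.mul_apply, Matrix.mulVec, dotProduct]
    simp only [Matrix.transpose_apply]
    rw [Finset.sum_mul, Finset.mul_sum]
    exact Finset.sum_congr rfl fun k _ => by ring
  calc ∑ a, (C.updateRow a (A.mulVec (C a))).det
      = ((C * Aᵀ) * C.adjugate).trace := by
        rw [Matrix.trace]; exact Finset.sum_congr rfl fun a _ => key a
    _ = ((C.adjugate * C) * Aᵀ).trace := by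
        rw [Matrix.trace_mul_comm, Matrix.mul_assoc]
    _ = A.trace * C.det := by
        rw [Matrix.adjugate_mul, Matrix.smul_mul, Matrix.one_mul, Matrix.trace_smul,
          Matrix.trace_transpose]
        simp [mul_comm]

/-- Laplace expansion along the first row, phrased with `skipE`. -/
lemma det_expand_row_zero {m : ℕ} (M : Matrix (Fin (m + 1)) (Fin (m + 1)) ℝ) :
    M.det = ∑ j : Fin (m + 1), (-1 : ℝ) ^ (j : ℕ) * M 0 j *
      (Matrix.of fun b' b : Fin m => M b'.succ (skipE j b)).det := by
  rw [Matrix.det_succ_row_zero]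
  refine Finset.sum_congr rfl fun j _ => ?_
  refine congrArg (fun d => (-1 : ℝ) ^ (j : ℕ) * M 0 j * d) (congrArg Matrix.det ?_)
  ext b' b
  rw [Matrix.submatrix_apply, Matrix.of_apply, skipE_eq_succAbove]

/-- The matrix with row `u` inserted on top of the rows of `C`, skipping row `a`. -/
noncomputable def insRow {m : ℕ} (C : Matrix (Fin (m + 1)) (Fin (m + 1)) ℝ)
    (a : Fin (m + 1)) (u : Fin (m + 1) → ℝ) : Matrix (Fin (m + 1)) (Fin (m + 1)) ℝ :=
  Matrix.of fun r k => if h : r = 0 then u k else C (skipE a (r.pred h)) k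

lemma updateRow_eq_submatrix {m : ℕ} (C : Matrix (Fin (m + 1)) (Fin (m + 1)) ℝ)
    (a : Fin (m + 1)) (u : Fin (m + 1) → ℝ) :
    C.updateRow a u = (insRow C a u).submatrix a.cycleRange id := by
  ext r k
  rw [Matrix.submatrix_apply, id_eq]
  rcases lt_trichotomy r a with h | h | h
  · rw [Fin.cycleRange_of_lt h, Matrix.updateRow_ne (ne_of_lt h)]
    have hr1 : ((r + 1 : Fin (m + 1)) : ℕ) = (r : ℕ) + 1 := by
      rw [Fin.val_add_one_of_lt]
      exact lt_of_lt_of_le h (Fin.le_last a)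
    have hne : (r + 1 : Fin (m + 1)) ≠ 0 := by
      intro hc
      rw [hc] at hr1
      simp at hr1
    rw [insRow, Matrix.of_apply, dif_neg hne]
    refine congrArg (fun z => C z k) (Fin.ext ?_)
    have hp : (((r + 1 : Fin (m + 1)).pred hne) : ℕ) = (r : ℕ) := by
      rw [Fin.coe_pred, hr1]
      omega
    have hlt : (r : ℕ) < (a : ℕ) := h
    simp only [skipE, apply_ite (Fin.val)]
    split_ifs with hc <;> omega
  · subst h
    rw [Fin.cycleRange_self, Matrix.updateRow_self, insRow, Matrix.of_apply, dif_pos rfl]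
  · rw [Fin.cycleRange_of_gt h, Matrix.updateRow_ne (ne_of_gt h)]
    have hne : r ≠ 0 := Fin.pos_iff_ne_zero.mp (lt_of_le_of_lt (Fin.zero_le a) h)
    rw [insRow, Matrix.of_apply, dif_neg hne]
    refine congrArg (fun z => C z k) (Fin.ext ?_)
    have hp : ((r.pred hne) : ℕ) = (r : ℕ) - 1 := Fin.coe_pred r hne
    have hlt : (a : ℕ) < (r : ℕ) := h
    have hr0 : (r : ℕ) ≠ 0 := by
      intro hc
      exact hne (Fin.ext (by simp [hc]))
    simp only [skipE, apply_ite (Fin.val)]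
    split_ifs with hc <;> omega

lemma det_insRow {m : ℕ} (C : Matrix (Fin (m + 1)) (Fin (m + 1)) ℝ)
    (a : Fin (m + 1)) (u : Fin (m + 1) → ℝ) :
    (insRow C a u).det = (-1 : ℝ) ^ (a : ℕ) * (C.updateRow a u).det := by
  have h := Matrix.det_permute (a.cycleRange) (insRow C a u)
  rw [← updateRow_eq_submatrix, Fin.sign_cycleRange] at h
  have hc : ((((-1 : ℤˣ) ^ (a : ℕ) : ℤˣ) : ℤ) : ℝ) = (-1 : ℝ) ^ (a : ℕ) := by
    push_cast
    ring
  rw [hc] at h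
  have hsq : (-1 : ℝ) ^ (a : ℕ) * (-1 : ℝ) ^ (a : ℕ) = 1 := by
    rw [← pow_add]
    exact Even.neg_one_pow ⟨(a : ℕ), rfl⟩
  rw [h, ← mul_assoc, hsq, one_mul]

lemma double_sum_eq {n : ℕ} (f : Fin n → Fin n → ℝ) (hd : ∀ i, f i i = 0)
    (hs : ∀ i j, f j i = f i j) :
    ∑ i, ∑ k, f i k = 2 * ∑ j, ∑ i ∈ Finset.Iio j, f i j := by
  have hrow : ∀ i : Fin n, ∑ k, f i k
      = (∑ k ∈ Finset.Iio i, f i k) + ∑ k ∈ Finset.Ioi i, f i k := by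
    intro i
    have huniv : (Finset.Iio i) ∪ (Finset.Ici i) = Finset.univ := by
      ext k
      simp [lt_or_ge k i]
    have hdisj : Disjoint (Finset.Iio i) (Finset.Ici i) := by
      rw [Finset.disjoint_left]
      intro k hk hk'
      simp only [Finset.mem_Iio] at hk
      simp only [Finset.mem_Ici] at hk'
      exact absurd hk (not_lt.mpr hk')
    rw [← huniv, Finset.sum_union hdisj, ← Finset.Ioi_insert,
      Finset.sum_insert Finset.notMem_Ioi_self, hd i, zero_add]
  have hT : ∑ i : Fin n, ∑ k ∈ Finset.Ioi i, f i k
      = ∑ j : Fin n, ∑ i ∈ Finset.Iio j, f i j := by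
    rw [Finset.sum_sigma', Finset.sum_sigma']
    refine Finset.sum_nbij' (fun p => ⟨p.2, p.1⟩) (fun p => ⟨p.2, p.1⟩) ?_ ?_ ?_ ?_ ?_ <;>
      simp [Finset.mem_sigma, Finset.mem_Ioi, Finset.mem_Iio]
  have hU : ∑ i : Fin n, ∑ k ∈ Finset.Iio i, f i k
      = ∑ j : Fin n, ∑ i ∈ Finset.Iio j, f i j :=
    Finset.sum_congr rfl fun i _ => Finset.sum_congr rfl fun k _ => (hs i k).symm
  calc ∑ i, ∑ k, f i k
      = ∑ i : Fin n, ((∑ k ∈ Finset.Iio i, f i k) + ∑ k ∈ Finset.Ioi i, f i k) :=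
        Finset.sum_congr rfl fun i _ => hrow i
    _ = (∑ i : Fin n, ∑ k ∈ Finset.Iio i, f i k) + ∑ i : Fin n, ∑ k ∈ Finset.Ioi i, f i k :=
        Finset.sum_add_distrib
    _ = 2 * ∑ j, ∑ i ∈ Finset.Iio j, f i j := by rw [hT, hU]; ring

open Matrix in
lemma part1_algebra {n : ℕ} (A : Matrix (Fin n) (Fin n) ℝ) (hA : Aᵀ = -A)
    (c0 c1 : Fin n → ℝ) :
    (∑ i, -((A.mulVec c0) i) * c1 i) - ∑ i, -((A.mulVec c1) i) * c0 i
      = -2 * ∑ j, ∑ i ∈ Finset.Iio j, A j i * (c0 i * c1 j - c0 j * c1 i) := by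
  have hAs : ∀ i k : Fin n, A k i = -A i k := by
    intro i k
    have h := congrFun (congrFun hA i) k
    simpa [Matrix.transpose_apply] using h
  have key := double_sum_eq (fun i k => A i k * (c1 k * c0 i - c0 k * c1 i))
    (fun i => by ring) (fun i k => by rw [hAs i k]; ring)
  calc (∑ i, -((A.mulVec c0) i) * c1 i) - ∑ i, -((A.mulVec c1) i) * c0 i
      = ∑ i, ∑ k, A i k * (c1 k * c0 i - c0 k * c1 i) := by
        rw [← Finset.sum_sub_distrib]
        refine Finset.sum_congr rfl fun i _ => ?_
        simp only [Matrix.mulVec, dotProduct]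
        rw [neg_mul, neg_mul, Finset.sum_mul, Finset.sum_mul, ← Finset.sum_neg_distrib,
          ← Finset.sum_neg_distrib, ← Finset.sum_sub_distrib]
        exact Finset.sum_congr rfl fun k _ => by ring
    _ = 2 * ∑ j, ∑ i ∈ Finset.Iio j, A i j * (c1 j * c0 i - c0 j * c1 i) := key
    _ = -2 * ∑ j, ∑ i ∈ Finset.Iio j, A j i * (c0 i * c1 j - c0 j * c1 i) := by
        rw [show (∑ j, ∑ i ∈ Finset.Iio j, A i j * (c1 j * c0 i - c0 j * c1 i))
            = -∑ j, ∑ i ∈ Finset.Iio j, A j i * (c0 i * c1 j - c0 j * c1 i) from ?_]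
        · ring
        · rw [← Finset.sum_neg_distrib]
          refine Finset.sum_congr rfl fun j _ => ?_
          rw [← Finset.sum_neg_distrib]
          refine Finset.sum_congr rfl fun i _ => ?_
          rw [hAs j i]
          ring

theorem coboundaries_in_dual_invariant_complex (n : ℕ) (hn : 3 ≤ n) :
    (∀ x ∈ hAff n, ∀ ys : Fin 2 → Vec n, (∀ a, ys a ∈ JAff n) →
        ∑ i : Fin 2, (-1 : ℝ) ^ (i : ℕ) *
            gStar n (br x (ys i)) (fun b => ys (skipE i b))
          = -2 * sStar n x ys) ∧
    (∀ x ∈ hAff n, ∀ ys : Fin (n - 1) → Vec n, (∀ a, ys a ∈ JAff n) →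
        ∑ i : Fin (n - 1), (-1 : ℝ) ^ (i : ℕ) *
            gammaStar n (br x (ys i)) (fun b => ys (skipE i b)) = 0) ∧
    (∀ x ∈ hAff n, ∀ ys : Fin n → Vec n, (∀ a, ys a ∈ JAff n) →
        ∑ i : Fin n, (-1 : ℝ) ^ (i : ℕ) *
            wStar n (br x (ys i)) (fun b => ys (skipE i b)) = 0) := by
  obtain ⟨m, rfl⟩ : ∃ m, n = m + 1 := ⟨n - 1, by omega⟩
  refine ⟨?_, ?_, ?_⟩
  · -- δ(gₙ*) = -2 sₙ*
    intro x hx ys hys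
    obtain ⟨A, c, hA, rfl⟩ := mem_hAff_affine hx
    choose cs hcs using fun a => mem_JAff_const (hys a)
    have h0 : skipE (0 : Fin 2) (0 : Fin 1) = 1 := by decide
    have h1 : skipE (1 : Fin 2) (0 : Fin 1) = 0 := by decide
    have e0 : gStar (m + 1) (br (fun p => A.mulVec p + c) (ys 0))
        (fun b => ys (skipE (0 : Fin 2) b)) = ∑ i, -((A.mulVec (cs 0)) i) * cs 1 i := by
      rw [hcs 0, br_affine_const]
      refine Finset.sum_congr rfl fun i _ => ?_
      show -(A.mulVec (cs 0)) i * (ys (skipE (0 : Fin 2) 0)) 0 i = _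
      rw [h0, hcs 1]
    have e1 : gStar (m + 1) (br (fun p => A.mulVec p + c) (ys 1))
        (fun b => ys (skipE (1 : Fin 2) b)) = ∑ i, -((A.mulVec (cs 1)) i) * cs 0 i := by
      rw [hcs 1, br_affine_const]
      refine Finset.sum_congr rfl fun i _ => ?_
      show -(A.mulVec (cs 1)) i * (ys (skipE (1 : Fin 2) 0)) 0 i = _
      rw [h1, hcs 0]
    have es : sStar (m + 1) (fun p => A.mulVec p + c) ys
        = ∑ j, ∑ i ∈ Finset.Iio j, A j i * (cs 0 i * cs 1 j - cs 0 j * cs 1 i) := by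
      refine Finset.sum_congr rfl fun j _ => Finset.sum_congr rfl fun i _ => ?_
      rw [alphaDual_affine]
      show A j i * ((ys 0) 0 i * (ys 1) 0 j - (ys 0) 0 j * (ys 1) 0 i) = _
      rw [hcs 0, hcs 1]
    rw [Fin.sum_univ_two, e0, e1, es]
    simp only [Fin.val_zero, Fin.val_one, pow_zero, pow_one, one_mul, neg_one_mul]
    linear_combination part1_algebra A hA (cs 0) (cs 1)
  · -- δ(γₙ*) = 0
    intro x hx ys hys
    obtain ⟨A, c, hA, rfl⟩ := mem_hAff_affine hx
    choose cs hcs using fun a => mem_JAff_const (hys a)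
    refine Finset.sum_eq_zero fun a _ => ?_
    rw [hcs a, br_affine_const]
    have : gammaStar (m + 1) (fun _ => -(A.mulVec (cs a)))
        (fun b => ys (skipE a b)) = 0 := by
      refine Finset.sum_eq_zero fun j _ => Finset.sum_eq_zero fun i _ => ?_
      rw [alphaDual_const]
      ring
    rw [this, mul_zero]
  · -- δ(wₙ*) = 0
    intro x hx ys hys
    obtain ⟨A, c, hA, rfl⟩ := mem_hAff_affine hx
    choose cs hcs using fun a => mem_JAff_const (hys a)
    set C : Matrix (Fin (m + 1)) (Fin (m + 1)) ℝ := Matrix.of fun r k => cs r k with hC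
    set u : Fin (m + 1) → Fin (m + 1) → ℝ := fun a => -(A.mulVec (cs a)) with hu
    have stepA : ∀ a : Fin (m + 1),
        wStar (m + 1) (br (fun p => A.mulVec p + c) (ys a)) (fun b => ys (skipE a b))
          = (insRow C a (u a)).det := by
      intro a
      rw [hcs a, br_affine_const, det_expand_row_zero]
      refine Finset.sum_congr rfl fun j _ => ?_
      have hrow0 : insRow C a (u a) 0 j = u a j := by
        rw [insRow, Matrix.of_apply, dif_pos rfl]
      refine congrArg₂ (fun s t : ℝ => s * t) ?_ (congrArg Matrix.det ?_)
      · rw [hrow0]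
        rfl
      · ext b' b
        rw [Matrix.of_apply, Matrix.of_apply, insRow, Matrix.of_apply,
          dif_neg (Fin.succ_ne_zero b'), Fin.pred_succ]
        show (ys (skipE a b')) 0 (skipE j b) = C (skipE a b') (skipE j b)
        rw [hcs (skipE a b'), hC]
        rfl
    have hsq : ∀ a : Fin (m + 1), (-1 : ℝ) ^ (a : ℕ) * (-1 : ℝ) ^ (a : ℕ) = 1 := by
      intro a
      rw [← pow_add]
      exact Even.neg_one_pow ⟨(a : ℕ), rfl⟩
    have htr : Matrix.trace (-A) = 0 := by
      have h1 : Matrix.trace A = -Matrix.trace A := by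
        conv_lhs => rw [← Matrix.trace_transpose, hA, Matrix.trace_neg]
      have h2 : Matrix.trace A = 0 := by linarith
      rw [Matrix.trace_neg, h2, neg_zero]
    calc ∑ a : Fin (m + 1), (-1 : ℝ) ^ (a : ℕ) *
            wStar (m + 1) (br (fun p => A.mulVec p + c) (ys a)) (fun b => ys (skipE a b))
        = ∑ a : Fin (m + 1), (C.updateRow a ((-A).mulVec (C a))).det := by
          refine Finset.sum_congr rfl fun a _ => ?_
          rw [stepA a, det_insRow, ← mul_assoc, hsq a, one_mul]
          refine congrArg (fun v => (C.updateRow a v).det) ?_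
          rw [Matrix.neg_mulVec]
          rfl
      _ = Matrix.trace (-A) * C.det := sum_det_updateRow_mulVec C (-A)
      _ = 0 := by rw [htr, zero_mul]
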